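/- Suppose (x, y) is a symmetric ε-Nash equilibrium of the symmetrized game (A, B) (with A, B as above) and |x|, |y| ≥ 1/(4n). Then (x/|x|, y/|y|) is a 4nε-Nash equilibrium of the original win-lose game (R, C): for every i in the support of x/|x| and every j, (R·(y/|y|))_i ≥ (R·(y/|y|))_j − 4nε, and symmetrically for the column player with C. -/
import Mathlib


open Matrix

/-- If (x, y) is a symmetric ε-Nash of the symmetrized game (A, Aᵀ) of a
win-lose game (R, C), and both halves carry mass at least 1/(4n), then the
normalized pair (x/|x|, y/|y|) is a 4nε-Nash equilibrium of (R, C). -/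
theorem symmetrized_to_winlose_nash (n : ℕ) (hn : 0 < n)
    (R C : Matrix (Fin n) (Fin n) ℝ)
    (hR : ∀ i j, R i j = -1 ∨ R i j = 0) (hC : ∀ i j, C i j = -1 ∨ C i j = 0)
    (A : Matrix (Fin n ⊕ Fin n) (Fin n ⊕ Fin n) ℝ)
    (hA : A = Matrix.of fun a b =>
      match a, b with
      | Sum.inl _, Sum.inl _ => -1
      | Sum.inl i, Sum.inr j => R i j
      | Sum.inr i, Sum.inl j => C j i
      | Sum.inr _, Sum.inr _ => -1)
    (ε : ℝ) (hε0 : 0 ≤ ε)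
    (z : Fin n ⊕ Fin n → ℝ) (hz0 : ∀ a, 0 ≤ z a) (hz1 : ∑ a, z a = 1)
    (hNash : ∀ a, 0 < z a → ∀ b, A.mulVec z a ≥ A.mulVec z b - ε)
    (hx : (∑ i, z (Sum.inl i)) ≥ 1 / (4 * n))
    (hy : (∑ i, z (Sum.inr i)) ≥ 1 / (4 * n)) :
    (∀ i : Fin n, 0 < z (Sum.inl i) → ∀ j : Fin n,
        (∑ k, R i k * (z (Sum.inr k) / (∑ i', z (Sum.inr i')))) ≥
          (∑ k, R j k * (z (Sum.inr k) / (∑ i', z (Sum.inr i')))) - 4 * n * ε) ∧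
    (∀ j : Fin n, 0 < z (Sum.inr j) → ∀ j' : Fin n,
        (∑ k, (z (Sum.inl k) / (∑ i', z (Sum.inl i'))) * C k j) ≥
          (∑ k, (z (Sum.inl k) / (∑ i', z (Sum.inl i'))) * C k j') - 4 * n * ε) := by
  subst hA
  have hnpos : (0:ℝ) < 4 * n := by positivity
  have hXpos : (0:ℝ) < ∑ i, z (Sum.inl i) := lt_of_lt_of_le (by positivity) hx
  have hYpos : (0:ℝ) < ∑ i, z (Sum.inr i) := lt_of_lt_of_le (by positivity) hy
  have hεY : ε / (∑ i, z (Sum.inr i)) ≤ 4 * n * ε := by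
    rw [div_le_iff₀ hYpos]
    calc ε = (4 * n * ε) * (1 / (4 * n)) := by field_simp
    _ ≤ (4 * n * ε) * (∑ i, z (Sum.inr i)) :=
      mul_le_mul_of_nonneg_left hy (by positivity)
  have hεX : ε / (∑ i, z (Sum.inl i)) ≤ 4 * n * ε := by
    rw [div_le_iff₀ hXpos]
    calc ε = (4 * n * ε) * (1 / (4 * n)) := by field_simp
    _ ≤ (4 * n * ε) * (∑ i, z (Sum.inl i)) :=
      mul_le_mul_of_nonneg_left hx (by positivity)
  constructor
  · intro i hi j
    have h := hNash (Sum.inl i) hi (Sum.inl j)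
    simp only [Matrix.mulVec, dotProduct, Matrix.of_apply, Fintype.sum_sum_type,
      neg_one_mul, Finset.sum_neg_distrib] at h
    have hS : (∑ k, R j k * z (Sum.inr k)) - ε ≤ ∑ k, R i k * z (Sum.inr k) := by
      linarith
    have heq : ∀ w : Fin n, (∑ k, R w k * (z (Sum.inr k) / (∑ i', z (Sum.inr i')))) =
        (∑ k, R w k * z (Sum.inr k)) / (∑ i', z (Sum.inr i')) := by
      intro w; rw [Finset.sum_div]; exact Finset.sum_congr rfl fun k _ => by ring
    rw [heq, heq]
    have h1 : ((∑ k, R j k * z (Sum.inr k)) - ε) / (∑ i', z (Sum.inr i')) ≤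
        (∑ k, R i k * z (Sum.inr k)) / (∑ i', z (Sum.inr i')) :=
      (div_le_div_iff_of_pos_right hYpos).mpr hS
    rw [sub_div] at h1
    linarith
  · intro j hj j'
    have h := hNash (Sum.inr j) hj (Sum.inr j')
    simp only [Matrix.mulVec, dotProduct, Matrix.of_apply, Fintype.sum_sum_type,
      neg_one_mul, Finset.sum_neg_distrib] at h
    have hS : (∑ k, C k j' * z (Sum.inl k)) - ε ≤ ∑ k, C k j * z (Sum.inl k) := by
      linarith
    have heq : ∀ w : Fin n, (∑ k, (z (Sum.inl k) / (∑ i', z (Sum.inl i'))) * C k w) =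
        (∑ k, C k w * z (Sum.inl k)) / (∑ i', z (Sum.inl i')) := by
      intro w; rw [Finset.sum_div]; exact Finset.sum_congr rfl fun k _ => by ring
    rw [heq, heq]
    have h1 : ((∑ k, C k j' * z (Sum.inl k)) - ε) / (∑ i', z (Sum.inl i')) ≤
        (∑ k, C k j * z (Sum.inl k)) / (∑ i', z (Sum.inl i')) :=
      (div_le_div_iff_of_pos_right hXpos).mpr hS
    rw [sub_div] at h1
    linarith
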